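/- For every d ∈ ℕ and every real x ∈ (0, 1) such that the series Σ_{n≥1} A_{d+1,n} x^{n−1} converges, the family ( −(1/2) · log(1 − x^{|t|}) )_{t ∈ T_d} is summable and Σ_{t ∈ T_d} −(1/2) · log(1 − x^{|t|}) = (1/2) · log( Σ_{n≥1} A_{d+1,n} x^{n−1} ). -/

import Mathlib

/-- Rooted unlabeled trees of depth at most `d`: `T_0` is the single-vertex tree and
`T_{d+1}` is the type of multisets of trees in `T_d`. -/
def TreeT : ℕ → Type
  | 0 => PUnit
  | d + 1 => Multiset (TreeT d)

/-- Number of vertices of a tree. -/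
def treeSize : (d : ℕ) → TreeT d → ℕ
  | 0, _ => 1
  | d + 1, m => 1 + (Multiset.map (treeSize d) (m : Multiset (TreeT d))).sum

/-- `aCount d n` is the number of rooted unlabeled trees of depth at most `d`
with exactly `n` vertices. -/
noncomputable def aCount (d n : ℕ) : ℕ :=
  {t : TreeT d | treeSize d t = n}.ncard

/-!
Since `T_{d+1} = Multiset T_d` and the size of a tree is one more than the total size of its
subtrees, `Σ_n A_{d+1,n+1} xⁿ` is the sum of `∏_{t ∈ m} x^{|t|}` over all multisets `m` of trees in
`T_d`. Expanding each factor of `∏_t (1 - x^{|t|})⁻¹` as a geometric series gives the same sum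
(an Euler product over `T_d`), and taking logarithms turns this product into the claimed series.
-/

open Filter

theorem Multiset.finite_setOf_card_le_of_forall_mem {α : Type*} (s : Finset α) (n : ℕ) :
    {m : Multiset α | card m ≤ n ∧ ∀ a ∈ m, a ∈ s}.Finite := by
  classical
  refine (n • s.val).powerset.toFinset.finite_toSet.subset fun m ⟨hcard, hmem⟩ => ?_
  simp only [Finset.mem_coe, Multiset.mem_toFinset, Multiset.mem_powerset, Multiset.le_iff_count]
  intro a
  by_cases ha : a ∈ s
  · rw [Multiset.count_nsmul, Multiset.count_eq_one_of_mem s.nodup ha, mul_one]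
    exact (Multiset.count_le_card a m).trans hcard
  · rw [Multiset.count_eq_zero_of_notMem fun h => ha (hmem a h)]
    exact Nat.zero_le _

theorem treeSize_succ (d : ℕ) (m : Multiset (TreeT d)) :
    treeSize (d + 1) m = 1 + (m.map (treeSize d)).sum := rfl

theorem one_le_treeSize : ∀ (d : ℕ) (t : TreeT d), 1 ≤ treeSize d t
  | 0, _ => le_rfl
  | _ + 1, _ => Nat.le_add_right _ _

theorem finite_setOf_treeSize_le : ∀ d n : ℕ, {t : TreeT d | treeSize d t ≤ n}.Finite
  | 0, _ => Set.toFinite (α := PUnit) _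
  | d + 1, n => by
    refine (Multiset.finite_setOf_card_le_of_forall_mem
      (finite_setOf_treeSize_le d n).toFinset n).subset fun m hm => ?_
    have hsum : (m.map (treeSize d)).sum ≤ n := by
      have : treeSize (d + 1) m ≤ n := hm
      rw [treeSize_succ] at this
      omega
    refine ⟨?_, fun t ht => ?_⟩
    · calc Multiset.card m = (m.map fun _ => 1).sum := by simp
        _ ≤ (m.map (treeSize d)).sum :=
          Multiset.sum_map_le_sum_map _ _ fun t _ => one_le_treeSize d t
        _ ≤ n := hsum
    · rw [Set.Finite.mem_toFinset]
      exact (Multiset.le_sum_of_mem (Multiset.mem_map_of_mem _ ht)).trans hsum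

theorem aCount_succ_succ (d n : ℕ) :
    aCount (d + 1) (n + 1) =
      Nat.card ((fun m : Multiset (TreeT d) => (m.map (treeSize d)).sum) ⁻¹' {n}) := by
  rw [aCount, ← Nat.card_coe_set_eq]
  congr 2
  ext m
  change 1 + (Multiset.map (treeSize d) m).sum = n + 1 ↔ (Multiset.map (treeSize d) m).sum = n
  omega

section EulerProduct

variable {α 𝕜 : Type*} [NormedField 𝕜] [CompleteSpace 𝕜] {w : α → 𝕜}

theorem tsum_indicator_forall_mem_prod_map (hw : ∀ a, w a ≠ 1)
    (hG : Summable fun m : Multiset α => (m.map w).prod) (s : Finset α) :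
    ∑' m, {m : Multiset α | ∀ a ∈ m, a ∈ s}.indicator (fun m => (m.map w).prod) m =
      ∏ a ∈ s, (1 - w a)⁻¹ := by
  classical
  induction s using Finset.induction with
  | empty =>
    rw [Finset.prod_empty, tsum_eq_single 0]
    · simp
    · intro m hm
      obtain ⟨a, ha⟩ := Multiset.exists_mem_of_ne_zero hm
      refine Set.indicator_of_notMem (fun h : ∀ b ∈ m, b ∈ (∅ : Finset α) => ?_) _
      exact Finset.notMem_empty a (h a ha)
  | insert a s ha ih =>
    set G : Multiset α → 𝕜 := fun m => (m.map w).prod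
    set F := {m : Multiset α | ∀ b ∈ m, b ∈ insert a s}.indicator G
    -- Split off the multisets containing `a`; these are exactly the `a ::ₘ m`, and consing `a`
    -- multiplies `F` by `w a`, so `∑ F = ∑_{supp ⊆ s} G + w a * ∑ F`.
    have hsplit :
        F = {m : Multiset α | ∀ b ∈ m, b ∈ s}.indicator G + {m | a ∈ m}.indicator F := by
      ext m
      by_cases ham : a ∈ m
      · have : m ∉ {m : Multiset α | ∀ b ∈ m, b ∈ s} := fun h => ha (h a ham)
        simp [Set.indicator_of_notMem this, ham]
      · simp only [F, Pi.add_apply, Set.indicator_apply, Set.mem_ofPred_eq, ham, if_false,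
          add_zero, Finset.mem_insert]
        congr 1
        exact propext (forall₂_congr fun b hb => or_iff_right (ne_of_mem_of_not_mem hb ham))
    have hcons : ∀ m, F (a ::ₘ m) = w a * F m := by
      intro m
      simp [F, G, Set.indicator_apply]
    have hcons_sum : ∑' m, {m | a ∈ m}.indicator F m = w a * ∑' m, F m := by
      have hinj : Function.Injective (a ::ₘ ·) := fun _ _ h => (Multiset.cons_inj_right a).mp h
      rw [← hinj.tsum_eq, ← tsum_mul_left]
      · simp [hcons]
      · intro m hm
        have : a ∈ m := by by_contra h; simp [h] at hm
        exact ⟨m.erase a, Multiset.cons_erase this⟩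
    have hT : ∑' m, F m =
        ∑' m, {m : Multiset α | ∀ b ∈ m, b ∈ s}.indicator G m + w a * ∑' m, F m := by
      conv_lhs => rw [hsplit]
      rw [Pi.add_def, Summable.tsum_add (hG.indicator _) ((hG.indicator _).indicator _), hcons_sum]
    rw [Finset.prod_insert ha, ← ih]
    have h1 : 1 - w a ≠ 0 := sub_ne_zero.mpr (hw a).symm
    field_simp
    linear_combination hT

theorem hasProd_inv_one_sub_of_summable_norm_prod_map (hw : ∀ a, w a ≠ 1)
    (hG : Summable fun m : Multiset α => ‖(m.map w).prod‖) :
    HasProd (fun a => (1 - w a)⁻¹) (∑' m : Multiset α, (m.map w).prod) := by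
  classical
  unfold HasProd
  simp only [SummationFilter.unconditional_filter]
  simp_rw [← tsum_indicator_forall_mem_prod_map hw hG.of_norm]
  refine tendsto_tsum_of_dominated_convergence hG (fun m => ?_)
    (Eventually.of_forall fun s m => ?_)
  · refine tendsto_const_nhds.congr' ?_
    filter_upwards [eventually_ge_atTop m.toFinset] with s hs
    have hm : m ∈ {m : Multiset α | ∀ a ∈ m, a ∈ s} := fun a ha =>
      hs (Multiset.mem_toFinset.mpr ha)
    exact (Set.indicator_of_mem hm (fun m : Multiset α => (m.map w).prod)).symm
  · exact norm_indicator_le_norm_self _ _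

end EulerProduct

theorem hasSum_comp_of_hasSum_card_fiber {β : Type*} (f : β → ℕ) (hf : ∀ n, (f ⁻¹' {n}).Finite)
    {g : ℕ → ℝ} (hg : ∀ n, 0 ≤ g n) {S : ℝ}
    (h : HasSum (fun n => (Nat.card (f ⁻¹' {n}) : ℝ) * g n) S) :
    HasSum (fun b => g (f b)) S := by
  have hfiber : ∀ n, ∑' b : f ⁻¹' {n}, g (f b) = Nat.card (f ⁻¹' {n}) * g n := fun n => by
    rw [tsum_congr fun b : f ⁻¹' {n} => congrArg g b.2, tsum_const, nsmul_eq_mul]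
  have hsummable : Summable fun b => g (f b) :=
    (summable_partition (fun b => hg (f b)) fun b => ⟨f b, rfl, fun n hn => hn.symm⟩).mpr
      ⟨fun n => (hf n).summable (g ∘ f), h.summable.congr fun n => (hfiber n).symm⟩
  have hfiberwise := hsummable.hasSum.tsum_fiberwise f
  simp_rw [hfiber] at hfiberwise
  exact h.unique hfiberwise ▸ hsummable.hasSum

theorem hasSum_prod_map_pow_treeSize (d : ℕ) {x : ℝ} (hx : 0 ≤ x)
    (hsum : Summable fun n : ℕ => (aCount (d + 1) (n + 1) : ℝ) * x ^ n) :
    HasSum (fun m : Multiset (TreeT d) => (m.map fun t => x ^ treeSize d t).prod)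
      (∑' n : ℕ, (aCount (d + 1) (n + 1) : ℝ) * x ^ n) := by
  have hprod : ∀ m : Multiset (TreeT d),
      (m.map fun t => x ^ treeSize d t).prod = x ^ (m.map (treeSize d)).sum := fun m => by
    induction m using Multiset.induction with
    | empty => simp
    | cons t m ih => simp [ih, pow_add]
  simp_rw [hprod]
  refine hasSum_comp_of_hasSum_card_fiber _ (fun n => ?_) (fun n => pow_nonneg hx n) ?_
  · refine (finite_setOf_treeSize_le (d + 1) (n + 1)).subset fun m hm => ?_
    have hm : (m.map (treeSize d)).sum = n := hm
    change 1 + _ ≤ n + 1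
    omega
  · simp_rw [← aCount_succ_succ]
    exact hsum.hasSum

/-- For `x ∈ (0,1)` such that `Σ_{n≥1} A_{d+1,n} x^{n-1}` converges, the family
`(-(1/2) log(1 - x^{|t|}))_{t ∈ T_d}` is summable with sum
`(1/2) log( Σ_{n≥1} A_{d+1,n} x^{n-1} )`. -/
theorem kl_limit_sum (d : ℕ) (x : ℝ) (hx0 : 0 < x) (hx1 : x < 1)
    (hsum : Summable fun n : ℕ => (aCount (d + 1) (n + 1) : ℝ) * x ^ n) :
    (Summable fun t : TreeT d => -(1 / 2 : ℝ) * Real.log (1 - x ^ treeSize d t)) ∧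
    ∑' t : TreeT d, -(1 / 2 : ℝ) * Real.log (1 - x ^ treeSize d t) =
      (1 / 2 : ℝ) * Real.log (∑' n : ℕ, (aCount (d + 1) (n + 1) : ℝ) * x ^ n) := by
  set w : TreeT d → ℝ := fun t => x ^ treeSize d t
  have hw1 : ∀ t, w t < 1 := fun t =>
    pow_lt_one₀ hx0.le hx1 (Nat.one_le_iff_ne_zero.mp (one_le_treeSize d t))
  have hgen := hasSum_prod_map_pow_treeSize d hx0.le hsum
  have hprod : HasProd (fun t => (1 - w t)⁻¹) (∑' n : ℕ, (aCount (d + 1) (n + 1) : ℝ) * x ^ n) :=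
    hgen.tsum_eq ▸ hasProd_inv_one_sub_of_summable_norm_prod_map (fun t => (hw1 t).ne)
      (by simpa only [Real.norm_eq_abs] using hgen.summable.abs)
  have hw : Summable w :=
    (hgen.summable.comp_injective fun _ _ => Multiset.singleton_inj.mp).congr fun t => by simp [w]
  have hlog : Summable fun t => Real.log (1 - w t)⁻¹ :=
    (Real.summable_log_one_add_of_summable hw.neg).neg.congr fun t => by
      rw [Real.log_inv, ← sub_eq_add_neg]
  have hexp : Real.exp (∑' t, Real.log (1 - w t)⁻¹) =
      ∑' n : ℕ, (aCount (d + 1) (n + 1) : ℝ) * x ^ n :=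
    (Real.hasProd_of_hasSum_log (fun t => inv_pos.2 (sub_pos.2 (hw1 t))) hlog.hasSum).unique hprod
  have hterm : ∀ t, -(1 / 2 : ℝ) * Real.log (1 - x ^ treeSize d t) =
      1 / 2 * Real.log (1 - w t)⁻¹ := fun t => by rw [Real.log_inv]; ring
  simp_rw [hterm]
  exact ⟨hlog.mul_left _, by rw [tsum_mul_left, ← hexp, Real.log_exp]⟩
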